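/- arXiv:2511.01557 — 6 statements merged into one kernel-verified Lean document; each statement's English description precedes it below -/
import Mathlib

section
/- Let x be a real number with 0 ≤ x ≤ 1/2. Then the infinite product ∏_{i=1}^∞ (1 − x^i) satisfies ∏_{i=1}^∞ (1 − x^i) ≥ (1 − x)(1 − x² − x³ − x⁴). -/
/-!
Split off the factors `(1 - x)(1 - x²)(1 - x³)` and bound the remaining product from below by
the Weierstrass inequality `∏ (1 - aᵢ) ≥ 1 - ∑ aᵢ`, which gives `1 - x⁴ / (1 - x)`. The resulting
lower bound `(1 - x²)(1 - x³)(1 - x - x⁴)` exceeds `(1 - x)(1 - x² - x³ - x⁴)` by `x⁷(1 - x²)`.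
-/

open Finset

theorem Finset.one_sub_sum_le_prod_one_sub {ι R : Type*} [CommRing R] [PartialOrder R]
    [IsOrderedRing R] (s : Finset ι) {a : ι → R} (h0 : ∀ i ∈ s, 0 ≤ a i)
    (h1 : ∀ i ∈ s, a i ≤ 1) : 1 - ∑ i ∈ s, a i ≤ ∏ i ∈ s, (1 - a i) := by
  classical
  induction s using Finset.induction_on with
  | empty => simp
  | insert j s hj ih =>
    simp only [mem_insert, forall_eq_or_imp] at h0 h1
    rw [sum_insert hj, prod_insert hj]
    have hsum : 0 ≤ ∑ i ∈ s, a i := sum_nonneg h0.2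
    calc 1 - (a j + ∑ i ∈ s, a i)
        ≤ 1 - (a j + ∑ i ∈ s, a i) + a j * ∑ i ∈ s, a i :=
          le_add_of_nonneg_right (mul_nonneg h0.1 hsum)
      _ = (1 - a j) * (1 - ∑ i ∈ s, a i) := by ring
      _ ≤ (1 - a j) * ∏ i ∈ s, (1 - a i) :=
          mul_le_mul_of_nonneg_left (ih h0.2 h1.2) (sub_nonneg.2 h1.1)

namespace Real

variable {ι : Type*} {a : ι → ℝ}

theorem multipliable_one_sub_of_summable (ha : Summable a) : Multipliable fun i ↦ 1 - a i := by
  simpa only [sub_eq_add_neg] using Real.multipliable_one_add_of_summable ha.neg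

theorem one_sub_tsum_le_tprod_one_sub (ha : Summable a) (h0 : ∀ i, 0 ≤ a i)
    (h1 : ∀ i, a i ≤ 1) : 1 - ∑' i, a i ≤ ∏' i, (1 - a i) := by
  refine le_hasProd_of_le_prod (multipliable_one_sub_of_summable ha).hasProd fun s ↦ ?_
  calc 1 - ∑' i, a i ≤ 1 - ∑ i ∈ s, a i := by gcongr; exact ha.sum_le_tsum s fun i _ ↦ h0 i
    _ ≤ ∏ i ∈ s, (1 - a i) := s.one_sub_sum_le_prod_one_sub (fun i _ ↦ h0 i) fun i _ ↦ h1 i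

end Real

theorem one_sub_mul_tsum_pow_add {x : ℝ} (hx0 : 0 ≤ x) (hx1 : x < 1) (k : ℕ) :
    (1 - x) * ∑' i : ℕ, x ^ (i + k) = x ^ k := by
  simp_rw [pow_add, tsum_mul_right, tsum_geometric_of_lt_one hx0 hx1]
  field_simp [(sub_pos.2 hx1).ne']

/-- For a real number `x` with `0 ≤ x ≤ 1/2`, the infinite product
`∏_{i=1}^∞ (1 - x^i)` is at least `(1 - x)(1 - x² - x³ - x⁴)`. -/
theorem tprod_one_sub_pow_ge (x : ℝ) (hx0 : 0 ≤ x) (hx : x ≤ 1 / 2) :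
    (1 - x) * (1 - x ^ 2 - x ^ 3 - x ^ 4) ≤ ∏' i : ℕ, (1 - x ^ (i + 1)) := by
  have hx1 : x < 1 := by linarith
  have hone_sub_pow : ∀ k : ℕ, 0 ≤ 1 - x ^ k := fun k ↦ sub_nonneg.2 (pow_le_one₀ hx0 hx1.le)
  have hsum : Summable fun i : ℕ ↦ x ^ (i + 4) :=
    (summable_nat_add_iff (f := (x ^ ·)) 4).2 (summable_geometric_of_lt_one hx0 hx1)
  have htail := Real.one_sub_tsum_le_tprod_one_sub hsum (fun i ↦ pow_nonneg hx0 _)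
    fun i ↦ pow_le_one₀ hx0 hx1.le
  calc (1 - x) * (1 - x ^ 2 - x ^ 3 - x ^ 4)
      ≤ (1 - x) * (1 - x ^ 2 - x ^ 3 - x ^ 4) + x ^ 7 * (1 - x ^ 2) :=
        le_add_of_nonneg_right (mul_nonneg (pow_nonneg hx0 7) (hone_sub_pow 2))
    _ = (1 - x ^ 2) * (1 - x ^ 3) * ((1 - x) - x ^ 4) := by ring
    _ = (1 - x) * (1 - x ^ 2) * (1 - x ^ 3) * (1 - ∑' i : ℕ, x ^ (i + 4)) := by
        rw [← one_sub_mul_tsum_pow_add hx0 hx1 4]; ring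
    _ ≤ (1 - x) * (1 - x ^ 2) * (1 - x ^ 3) * ∏' i : ℕ, (1 - x ^ (i + 4)) := by
        gcongr
        exact mul_nonneg (mul_nonneg (sub_nonneg.2 hx1.le) (hone_sub_pow 2)) (hone_sub_pow 3)
    _ = ∏' i : ℕ, (1 - x ^ (i + 1)) := by
        rw [← (Real.multipliable_one_sub_of_summable hsum).prod_mul_tprod_nat_mul'
          (f := fun i ↦ 1 - x ^ (i + 1)) (k := 3)]
        simp [prod_range_succ]
end

section
/- Let q ≥ 2, e ≥ 1 and a ≥ 1 be natural numbers and let r be a natural number with 0 ≤ r < e. Assume q^e ≥ 4 and set n = a·e + r; assume n ≥ 2. Then (q^e − 1)^a · (2e)^a · a! · q^(r²) · ∏_{i=1}^r (q^(2i) − 1) ≥ 2^a · q^n. (The left-hand side is the order of the normaliser of a Sylow d-torus in Sp_{2n}(q), whose last factor q^(r²)·∏_{i=1}^r (q^(2i) − 1) is the order of Sp_{2r}(q).) -/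
/-!
The left-hand side splits as the order `(q^e - 1)^a (2e)^a a!` of the wreath product
`(C_{q^e-1} ⋊ C_{2e}) ≀ S_a` times `|Sp_{2r}(q)| ≥ q^r`, and `q^n = (q^e)^a q^r`, so it suffices to
show `2^a (q^e)^a ≤ (q^e - 1)^a (2e)^a a!`. For `e ≥ 2` this holds factor by factor, since
`2x ≤ 4(x - 1)` once `x ≥ 2`. For `e = 1` we have `r = 0`, `a = n ≥ 2` and `q ≥ 4`, and the
factorial has to absorb the loss: `3q ≤ 4(q - 1)` and `4^a ≤ 3^a a!`.
-/

def symplecticOrder (q r : ℕ) : ℕ :=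
  q ^ (r ^ 2) * ∏ i ∈ Finset.Icc 1 r, (q ^ (2 * i) - 1)

theorem pow_le_symplecticOrder {q : ℕ} (hq : 2 ≤ q) (r : ℕ) : q ^ r ≤ symplecticOrder q r := by
  have hprod : 1 ≤ ∏ i ∈ Finset.Icc 1 r, (q ^ (2 * i) - 1) := by
    refine Finset.one_le_prod' fun i hi => ?_
    have : q ^ 1 ≤ q ^ (2 * i) :=
      Nat.pow_le_pow_right (by omega) (by have := (Finset.mem_Icc.mp hi).1; omega)
    rw [pow_one] at this
    omega
  calc q ^ r ≤ q ^ (r ^ 2) := Nat.pow_le_pow_right (by omega) (by nlinarith)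
    _ ≤ symplecticOrder q r := Nat.le_mul_of_pos_right _ hprod

theorem four_pow_le_three_pow_mul_factorial {a : ℕ} (ha : 2 ≤ a) :
    4 ^ a ≤ 3 ^ a * a.factorial := by
  induction a, ha using Nat.le_induction with
  | base => norm_num [Nat.factorial]
  | succ b hb ih =>
    calc 4 ^ (b + 1) = 4 * 4 ^ b := by ring
      _ ≤ (3 * (b + 1)) * (3 ^ b * b.factorial) := Nat.mul_le_mul (by omega) ih
      _ = 3 ^ (b + 1) * (b + 1).factorial := by rw [Nat.factorial_succ]; ring

theorem pow_le_sub_one_pow_mul_factorial {x a : ℕ} (hx : 4 ≤ x) (ha : 2 ≤ a) :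
    x ^ a ≤ (x - 1) ^ a * a.factorial := by
  refine Nat.le_of_mul_le_mul_left ?_ (pow_pos (by norm_num : 0 < 3) a)
  calc 3 ^ a * x ^ a = (3 * x) ^ a := (mul_pow 3 x a).symm
    _ ≤ (4 * (x - 1)) ^ a := Nat.pow_le_pow_left (by omega) a
    _ = 4 ^ a * (x - 1) ^ a := mul_pow 4 (x - 1) a
    _ ≤ (3 ^ a * a.factorial) * (x - 1) ^ a :=
      Nat.mul_le_mul_right _ (four_pow_le_three_pow_mul_factorial ha)
    _ = 3 ^ a * ((x - 1) ^ a * a.factorial) := by ring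

theorem sylow_torus_normaliser_card_ge_symplectic_general (q e a r n : ℕ)
    (hq : 2 ≤ q) (hr : r < e)
    (hqe : 4 ≤ q ^ e) (hn : n = a * e + r) (hn2 : 2 ≤ n) :
    2 ^ a * q ^ n ≤
      (q ^ e - 1) ^ a * (2 * e) ^ a * a.factorial * q ^ (r ^ 2) *
        ∏ i ∈ Finset.Icc 1 r, (q ^ (2 * i) - 1) := by
  subst hn
  have htorus : 2 ^ a * (q ^ e) ^ a ≤ (q ^ e - 1) ^ a * (2 * e) ^ a * a.factorial := by
    rcases Nat.lt_or_ge e 2 with he1 | he2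
    · obtain rfl : e = 1 := by omega
      rw [pow_one] at hqe ⊢
      have := pow_le_sub_one_pow_mul_factorial hqe (a := a) (by omega)
      calc 2 ^ a * q ^ a ≤ 2 ^ a * ((q - 1) ^ a * a.factorial) := Nat.mul_le_mul_left _ this
        _ = (q - 1) ^ a * (2 * 1) ^ a * a.factorial := by ring
    · have hfactor : 2 * q ^ e ≤ (q ^ e - 1) * (2 * e) := by
        have := Nat.mul_le_mul_left (q ^ e - 1) (by omega : 4 ≤ 2 * e)
        omega
      calc 2 ^ a * (q ^ e) ^ a = (2 * q ^ e) ^ a := (mul_pow _ _ _).symm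
        _ ≤ ((q ^ e - 1) * (2 * e)) ^ a := Nat.pow_le_pow_left hfactor a
        _ ≤ (q ^ e - 1) ^ a * (2 * e) ^ a * a.factorial := by
          rw [mul_pow]; exact Nat.le_mul_of_pos_right _ a.factorial_pos
  calc 2 ^ a * q ^ (a * e + r) = 2 ^ a * (q ^ e) ^ a * q ^ r := by ring
    _ ≤ (q ^ e - 1) ^ a * (2 * e) ^ a * a.factorial * symplecticOrder q r :=
      Nat.mul_le_mul htorus (pow_le_symplecticOrder hq r)
    _ = _ := by rw [symplecticOrder, ← mul_assoc]

/-- Lemma 3.11 (N in Sp): for natural numbers `q ≥ 2`, `e ≥ 1`, `a ≥ 1`, `0 ≤ r < e`,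
with `q^e ≥ 4` and `n = a·e + r ≥ 2`, the order
`(q^e - 1)^a * (2e)^a * a! * q^(r²) * ∏_{i=1}^r (q^(2i) - 1)` of the normaliser of a Sylow
`d`-torus in `Sp_{2n}(q)` is at least `2^a * q^n`. -/
theorem sylow_torus_normaliser_card_ge_symplectic (q e a r n : ℕ)
    (hq : 2 ≤ q) (he : 1 ≤ e) (ha : 1 ≤ a) (hr : r < e)
    (hqe : 4 ≤ q ^ e) (hn : n = a * e + r) (hn2 : 2 ≤ n) :
    2 ^ a * q ^ n ≤
      (q ^ e - 1) ^ a * (2 * e) ^ a * a.factorial * q ^ (r ^ 2) *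
        ∏ i ∈ Finset.Icc 1 r, (q ^ (2 * i) - 1) :=
  sylow_torus_normaliser_card_ge_symplectic_general q e a r n hq hr hqe hn hn2
end

section
/- Let q ≥ 2, e ≥ 1 and a ≥ 1 be natural numbers and let r be a natural number with 0 ≤ r ≤ e. Assume q^e ≥ 4 and set n = a·e + r; assume n ≥ 4. Let T = q^(r(r−1)) · (q^r − 1) · ∏_{i=1}^{r−1} (q^(2i) − 1) if r ≥ 1, and T = 1 if r = 0. Then (q^e − 1)^a · (2e)^a · a! · T ≥ 2^(a−1) · q^n. (Since the normaliser of a Sylow torus in SO_{2n}^±(q) has order (q^e ∓ 1)^a · (2e)^a · a!/2 · T, this expresses that this order is at least 2^(a−2) · q^n.) -/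
/-!
Write `X = q^e` and `T = |SO_{2r}^+(q)|`. The factor `q^r - 1` of `T` is at least `q^r / 2` and
the other factors are at least `1`, so `q^r ≤ 2T`; as `q^n = X^a q^r`, it suffices to show
`(2X)^a ≤ (X - 1)^a (2e)^a a!`. For `e ≥ 2` this follows from `2X ≤ 4(X - 1)`. For `e = 1`,
the conditions `r ≤ e` and `n ≥ 4` force `a ≥ 2`, and then `X^a ≤ (X - 1)^a a!` for `X ≥ 4`
by induction on `a`.
-/

def orthogonalPlusOrder (q r : ℕ) : ℕ :=
  if r = 0 then 1
  else q ^ (r * (r - 1)) * (q ^ r - 1) * ∏ i ∈ Finset.Icc 1 (r - 1), (q ^ (2 * i) - 1)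

lemma pow_le_two_mul_orthogonalPlusOrder {q : ℕ} (hq : 2 ≤ q) (r : ℕ) :
    q ^ r ≤ 2 * orthogonalPlusOrder q r := by
  rcases Nat.eq_zero_or_pos r with rfl | hr
  · simp [orthogonalPlusOrder]
  have hqr : 2 ≤ q ^ r := Nat.one_lt_pow hr.ne' hq
  have hprod : 1 ≤ ∏ i ∈ Finset.Icc 1 (r - 1), (q ^ (2 * i) - 1) := by
    refine Finset.one_le_prod' fun i hi => ?_
    have : 2 ≤ q ^ (2 * i) := Nat.one_lt_pow (by grind) hq
    omega
  have hpow : 1 ≤ q ^ (r * (r - 1)) := Nat.one_le_pow _ _ (by omega)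
  calc q ^ r ≤ 1 * (2 * (q ^ r - 1)) * 1 := by omega
    _ ≤ q ^ (r * (r - 1)) * (2 * (q ^ r - 1)) * ∏ i ∈ Finset.Icc 1 (r - 1), (q ^ (2 * i) - 1) :=
      Nat.mul_le_mul (Nat.mul_le_mul_right _ hpow) hprod
    _ = 2 * orthogonalPlusOrder q r := by
      rw [orthogonalPlusOrder, if_neg hr.ne']
      ring

lemma pow_le_pred_pow_mul_factorial {X : ℕ} (hX : 4 ≤ X) {a : ℕ} (ha : 2 ≤ a) :
    X ^ a ≤ (X - 1) ^ a * a.factorial := by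
  induction a, ha using Nat.le_induction with
  | base =>
    obtain ⟨Y, rfl⟩ : ∃ Y, X = Y + 1 := ⟨X - 1, by omega⟩
    simp only [Nat.add_sub_cancel, Nat.factorial_two]
    nlinarith
  | succ a ha ih =>
    calc X ^ (a + 1) = X ^ a * X := pow_succ X a
      _ ≤ (X - 1) ^ a * a.factorial * ((X - 1) * (a + 1)) :=
        Nat.mul_le_mul ih (by nlinarith [Nat.sub_add_cancel (by omega : 1 ≤ X)])
      _ = (X - 1) ^ (a + 1) * (a + 1).factorial := by
        rw [Nat.factorial_succ, pow_succ]
        ring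

lemma two_pow_mul_pow_le {X e a : ℕ} (hX : 4 ≤ X) (he : 1 ≤ e) (hae : 2 ≤ a ∨ 2 ≤ e) :
    2 ^ a * X ^ a ≤ (X - 1) ^ a * (2 * e) ^ a * a.factorial := by
  rcases hae with ha | he2
  · calc 2 ^ a * X ^ a ≤ (2 * e) ^ a * ((X - 1) ^ a * a.factorial) :=
          Nat.mul_le_mul (Nat.pow_le_pow_left (by omega) a) (pow_le_pred_pow_mul_factorial hX ha)
      _ = (X - 1) ^ a * (2 * e) ^ a * a.factorial := by ring
  · calc 2 ^ a * X ^ a = (2 * X) ^ a := (mul_pow 2 X a).symm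
      _ ≤ ((X - 1) * (2 * e)) ^ a := Nat.pow_le_pow_left
          ((by omega : 2 * X ≤ (X - 1) * 4).trans (Nat.mul_le_mul_left _ (by omega))) a
      _ = (X - 1) ^ a * (2 * e) ^ a * 1 := by rw [mul_pow, mul_one]
      _ ≤ (X - 1) ^ a * (2 * e) ^ a * a.factorial := Nat.mul_le_mul_left _ a.factorial_pos

/-- Lemma 3.18 (N in SO): for `q ≥ 2`, `e ≥ 1`, `a ≥ 1`, `0 ≤ r ≤ e`, with `q^e ≥ 4` and
`n = a·e + r ≥ 4`, and `T = |SO_{2r}^+(q)|` (with `T = 1` for `r = 0`),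
`(q^e - 1)^a * (2e)^a * a! * T ≥ 2^(a-1) * q^n`. -/
theorem sylow_torus_normaliser_card_ge_orthogonal (q e a r n : ℕ)
    (hq : 2 ≤ q) (he : 1 ≤ e) (ha : 1 ≤ a) (hr : r ≤ e)
    (hqe : 4 ≤ q ^ e) (hn : n = a * e + r) (hn4 : 4 ≤ n) :
    2 ^ (a - 1) * q ^ n ≤
      (q ^ e - 1) ^ a * (2 * e) ^ a * a.factorial *
        (if r = 0 then 1
          else q ^ (r * (r - 1)) * (q ^ r - 1) * ∏ i ∈ Finset.Icc 1 (r - 1), (q ^ (2 * i) - 1)) := by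
  change _ ≤ _ * orthogonalPlusOrder q r
  have hae : 2 ≤ a ∨ 2 ≤ e := by
    by_contra! h
    obtain ⟨rfl, rfl⟩ : a = 1 ∧ e = 1 := by omega
    omega
  have h2a : 2 ^ (a - 1) * 2 = 2 ^ a := by rw [← pow_succ, Nat.sub_add_cancel ha]
  refine Nat.le_of_mul_le_mul_right (c := 2) ?_ two_pos
  calc 2 ^ (a - 1) * q ^ n * 2 = 2 ^ a * (q ^ e) ^ a * q ^ r := by
        rw [hn, pow_add, mul_comm a e, pow_mul, ← h2a]
        ring
    _ ≤ (q ^ e - 1) ^ a * (2 * e) ^ a * a.factorial * (2 * orthogonalPlusOrder q r) :=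
      Nat.mul_le_mul (two_pow_mul_pow_le hqe he hae) (pow_le_two_mul_orthogonalPlusOrder hq r)
    _ = (q ^ e - 1) ^ a * (2 * e) ^ a * a.factorial * orthogonalPlusOrder q r * 2 := by ring
end

section
/- Let p be a prime and let n = a·p + r with natural numbers a, r satisfying 0 ≤ a ≤ p − 1 and 0 ≤ r ≤ p − 1. Let x be an element of the symmetric group S_n whose cycle type is (p)^a, i.e. x is a product of a disjoint p-cycles. Then for every Sylow p-subgroup P of S_n containing x, the subnormaliser of x in S_n equals the normaliser of P in S_n: Sub_{S_n}(x) = N_{S_n}(P). (In particular x is picky.) -/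
/-- `H` is subnormal in `K` (both subgroups of an ambient group `G`): there is a chain
`H = H₀ ⊴ H₁ ⊴ ⋯ ⊴ Hₘ = K` with each term normal in the next. -/
def Subgroup.IsSubnormalIn {G : Type*} [Group G] (H K : Subgroup G) : Prop :=
  ∃ (m : ℕ) (c : ℕ → Subgroup G), c 0 = H ∧ c m = K ∧
    ∀ i < m, c i ≤ c (i + 1) ∧ ((c i).subgroupOf (c (i + 1))).Normal

/-- The subnormaliser of an element `x` of a group `G`: the subgroup generated by all
`g ∈ G` such that `⟨x⟩` is subnormal in `⟨g, x⟩`. -/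
def subnormaliser {G : Type*} [Group G] (x : G) : Subgroup G :=
  Subgroup.closure
    {g : G | Subgroup.IsSubnormalIn (Subgroup.zpowers x) (Subgroup.closure {g, x})}

/-!
Since `a < p` and `r < p`, the cycles of `x` generate a subgroup of order `p ^ a`, which is a
Sylow `p`-subgroup of `S_n`. Hence all Sylow `p`-subgroups are abelian, and one containing `x`
centralises `x`. A `p`-element of the centraliser of `x` can permute neither the `a` cycles nor
the `r` fixed points of `x` nontrivially, so it is a product of powers of the cycles of `x`:
the Sylow `p`-subgroup containing `x` is unique, namely `P`, and it is abelian.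

If `⟨x⟩` is subnormal in `H = ⟨g, x⟩`, then `⟨x⟩` lies in every Sylow `p`-subgroup `S` of `H`:
for `Hᵢ ⊴ Hᵢ₊₁` the index of `S ∩ Hᵢ` in `Hᵢ` divides that of `S ∩ Hᵢ₊₁` in `Hᵢ₊₁`, so along a
subnormal chain the index of `S ∩ ⟨x⟩` in `⟨x⟩` divides `[H : S]`; it is prime to `p` and a power
of `p`, hence `1`. Thus `x` and `gxg⁻¹` lie in a common Sylow subgroup of `S_n`, which by
uniqueness is both `P` and `gPg⁻¹`. Conversely, if `g` normalises `P`, then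
`⟨x⟩ ⊴ P ∩ H ⊴ H` because `P` is abelian.
-/

open Subgroup Pointwise

namespace Subgroup

variable {G : Type*} [Group G]

theorem relIndex_dvd_index_of_normal_right [Finite G] (H N : Subgroup G) [N.Normal] :
    H.relIndex N ∣ H.index := by
  have hHN : H.relIndex N * N.index = (H ⊓ N).index := by
    simpa using relIndex_inf_mul_relIndex H N ⊤
  have hNH : N.relIndex H * H.index = (H ⊓ N).index := by
    simpa [inf_comm] using relIndex_inf_mul_relIndex N H ⊤
  obtain ⟨t, ht⟩ := relIndex_dvd_index_of_normal N H
  refine ⟨t, Nat.eq_of_mul_eq_mul_left (Nat.pos_of_dvd_of_pos (relIndex_dvd_card N H)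
    Nat.card_pos) ?_⟩
  rw [hNH, ← hHN, ht]
  ring

theorem relIndex_dvd_relIndex_of_normal [Finite G] (H : Subgroup G) {K L : Subgroup G}
    (hKL : K ≤ L) (hN : (K.subgroupOf L).Normal) : H.relIndex K ∣ H.relIndex L := by
  rw [← relIndex_subgroupOf hKL]
  exact relIndex_dvd_index_of_normal_right _ _

theorem isSubnormalIn_of_normal_of_normal {X M H : Subgroup G} (hXM : X ≤ M) (hMH : M ≤ H)
    (hX : (X.subgroupOf M).Normal) (hM : (M.subgroupOf H).Normal) : X.IsSubnormalIn H := by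
  refine ⟨2, fun i => if i = 0 then X else if i = 1 then M else H, rfl, rfl, fun i hi => ?_⟩
  interval_cases i
  exacts [⟨hXM, hX⟩, ⟨hMH, hM⟩]

theorem zpowers_isSubnormalIn_closure {P : Subgroup G} {x g : G} (hxP : x ∈ P)
    (hP : P ≤ centralizer {x}) (hg : g ∈ normalizer (P : Set G)) :
    (zpowers x).IsSubnormalIn (closure {g, x}) := by
  set H := closure {g, x}
  have hxH : x ∈ H := subset_closure (by simp)
  have hxM : zpowers x ≤ P ⊓ H := zpowers_le.2 (mem_inf.2 ⟨hxP, hxH⟩)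
  refine isSubnormalIn_of_normal_of_normal hxM inf_le_right ?_ ?_
  · rw [normal_subgroupOf_iff_le_normalizer hxM]
    calc P ⊓ H ≤ centralizer {x} := inf_le_left.trans hP
      _ = centralizer (zpowers x) := by rw [zpowers_eq_closure, centralizer_closure]
      _ ≤ normalizer (zpowers x) := centralizer_le_normalizer _
  · rw [inf_subgroupOf_right, normal_subgroupOf_iff_le_normalizer_inf]
    refine (closure_le _).2 fun y hy =>
      inf_normalizer_le_normalizer_inf ⟨?_, le_normalizer (subset_closure hy)⟩
    rcases hy with rfl | rfl
    exacts [hg, le_normalizer hxP]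

namespace IsSubnormalIn

variable [Finite G] {p : ℕ} [Fact p.Prime] {X H : Subgroup G}

theorem relIndex_dvd (h : X.IsSubnormalIn H) (Q : Subgroup G) :
    Q.relIndex X ∣ Q.relIndex H := by
  obtain ⟨m, c, rfl, rfl, hc⟩ := h
  suffices ∀ i ≤ m, Q.relIndex (c 0) ∣ Q.relIndex (c i) from this m le_rfl
  intro i hi
  induction i with
  | zero => rfl
  | succ i ih =>
    obtain ⟨hle, hN⟩ := hc i hi
    exact (ih (by omega)).trans (relIndex_dvd_relIndex_of_normal Q hle hN)

theorem le_of_not_dvd_relIndex (hX : IsPGroup p X) (h : X.IsSubnormalIn H) {Q : Subgroup G}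
    (hQ : ¬ p ∣ Q.relIndex H) : X ≤ Q := by
  obtain ⟨k, hk⟩ := hX.exists_card_eq
  have hcop : Nat.Coprime (p ^ k) (Q.relIndex H) :=
    Nat.Coprime.pow_left k ((Nat.Prime.coprime_iff_not_dvd Fact.out).2 hQ)
  rw [← relIndex_eq_one]
  exact Nat.eq_one_of_dvd_coprimes hcop (hk ▸ relIndex_dvd_card Q X) (h.relIndex_dvd Q)

theorem exists_sylow_mem_conj (hX : IsPGroup p X) (h : X.IsSubnormalIn H) {x g : G}
    (hx : x ∈ X) (hg : g ∈ H) : ∃ Q : Sylow p G, x ∈ Q ∧ g * x * g⁻¹ ∈ Q := by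
  obtain ⟨Q, hQ⟩ := Sylow.exists_comap_subtype_eq (Classical.arbitrary (Sylow p H))
  have hpQ : ¬ p ∣ (Q : Subgroup G).relIndex H := by
    rw [relIndex, ← comap_subtype, hQ]
    exact Sylow.not_dvd_index _
  have hpQ' : ¬ p ∣ (MulAut.conj g⁻¹ • (Q : Subgroup G)).relIndex H := by
    rwa [← conj_smul_eq_self_of_mem (inv_mem hg), relIndex_pointwise_smul]
  refine ⟨Q, h.le_of_not_dvd_relIndex hX hpQ hx, ?_⟩
  have := h.le_of_not_dvd_relIndex hX hpQ' hx
  rw [mem_pointwise_smul_iff_inv_smul_mem] at this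
  exact (by simpa using this : g * x * g⁻¹ ∈ (Q : Subgroup G))

end IsSubnormalIn

end Subgroup

theorem Sylow.commute_of_forall_commute {G : Type*} [Group G] [Finite G] {p : ℕ} [Fact p.Prime]
    (Q : Sylow p G) (hQ : ∀ a ∈ Q, ∀ b ∈ Q, Commute a b) (P : Sylow p G) {a b : G}
    (ha : a ∈ P) (hb : b ∈ P) : Commute a b := by
  let e := Sylow.equiv P Q
  have h := hQ _ (e ⟨a, ha⟩).2 _ (e ⟨b, hb⟩).2
  have : (⟨a, ha⟩ * ⟨b, hb⟩ : P) = ⟨b, hb⟩ * ⟨a, ha⟩ :=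
    e.injective (by rw [map_mul, map_mul]; exact Subtype.ext h)
  exact congrArg Subtype.val this

theorem eq_one_of_pow_prime_pow_eq_one {G : Type*} [Group G] [Finite G] {p : ℕ} (hp : p.Prime)
    (hG : ¬ p ∣ Nat.card G) {g : G} {k : ℕ} (hg : g ^ p ^ k = 1) : g = 1 := by
  rw [← orderOf_eq_one_iff]
  exact Nat.eq_one_of_dvd_coprimes (Nat.Coprime.pow_left k ((hp.coprime_iff_not_dvd).2 hG))
    (orderOf_dvd_of_pow_eq_one hg) (orderOf_dvd_natCard g)

theorem Nat.factorization_factorial_eq_div {p n : ℕ} (hp : p.Prime) (hn : n < p ^ 2) :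
    (Nat.factorial n).factorization p = n / p := by
  have := Fact.mk hp
  have hq : n / p < p := Nat.div_lt_of_lt_mul (by rwa [sq] at hn)
  conv_lhs => rw [← Nat.div_add_mod n p]
  rw [Nat.factorization_def _ hp, padicValNat_factorial_mul_add _ (Nat.mod_lt _ hp.pos),
    padicValNat_factorial_mul, ← Nat.factorization_def _ hp,
    Nat.factorization_factorial_eq_zero_of_lt hq, zero_add]

namespace Equiv.Perm

theorem eq_one_of_pow_prime_pow_eq_one {β : Type*} [Finite β] {p : ℕ} (hp : p.Prime)
    (hβ : Nat.card β < p) {σ : Perm β} {k : ℕ} (hσ : σ ^ p ^ k = 1) : σ = 1 :=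
  _root_.eq_one_of_pow_prime_pow_eq_one hp (by rw [Nat.card_perm, hp.dvd_factorial]; omega) hσ

variable {α : Type*} [DecidableEq α] [Fintype α]

open OnCycleFactors

def cyclePowers (g : Perm α) : Subgroup (Perm α) :=
  (noncommPiCoprod g.pairwise_commute_of_mem_zpowers).range

theorem kerParam_mk_one_left (g : Perm α) (v : (c : g.cycleFactorsFinset) → zpowers (c : Perm α)) :
    kerParam g (1, v) = noncommPiCoprod g.pairwise_commute_of_mem_zpowers v := by
  simp [kerParam]

theorem noncommPiCoprod_cycleFactors_injective (g : Perm α) :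
    Function.Injective (noncommPiCoprod g.pairwise_commute_of_mem_zpowers) := fun v w h =>
  congrArg Prod.snd (kerParam_injective g (show kerParam g (1, v) = kerParam g (1, w) by
    rw [kerParam_mk_one_left, kerParam_mk_one_left, h]))

theorem card_cyclePowers (g : Perm α) : Nat.card (cyclePowers g) = g.cycleType.prod := by
  rw [cyclePowers, ← Nat.card_congr (MonoidHom.ofInjective
    (noncommPiCoprod_cycleFactors_injective g)).toEquiv, Nat.card_pi, cycleType_def,
    Finset.prod_coe_sort_eq_attach,
    Finset.prod_attach g.cycleFactorsFinset (fun c => Nat.card (zpowers c)),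
    ← Finset.prod_map_val]
  refine Finset.prod_congr rfl fun c hc => ?_
  rw [Nat.card_zpowers, (mem_cycleFactorsFinset_iff.1 hc).1.orderOf, Function.comp_apply]

theorem commute_of_mem_cyclePowers {g σ τ : Perm α} (hσ : σ ∈ cyclePowers g)
    (hτ : τ ∈ cyclePowers g) : Commute σ τ := by
  obtain ⟨v, rfl⟩ := hσ
  obtain ⟨w, rfl⟩ := hτ
  rw [Commute, SemiconjBy, ← map_mul, ← map_mul,
    show v * w = w * v from funext fun c => mul_comm' (v c) (w c)]

theorem mem_cyclePowers_of_commute {p : ℕ} (hp : p.Prime) {g σ : Perm α} (hσ : Commute σ g)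
    {k : ℕ} (hσp : σ ^ p ^ k = 1) (hcycles : g.cycleFactorsFinset.card < p)
    (hfixed : Fintype.card (Function.fixedPoints g) < p) : σ ∈ cyclePowers g := by
  let s : centralizer {g} := ⟨σ, mem_centralizer_singleton_iff.2 hσ⟩
  have hs : s ^ p ^ k = 1 := Subtype.ext hσp
  have hker : s ∈ (toPermHom g).ker := eq_one_of_pow_prime_pow_eq_one hp
    (by rwa [Nat.card_eq_fintype_card, Fintype.card_coe]) (by rw [← map_pow, hs, map_one])
  obtain ⟨⟨u, v⟩, huv⟩ : σ ∈ (kerParam g).range := by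
    rw [kerParam_range_eq]
    exact ⟨s, hker, rfl⟩
  have hu : u = 1 := by
    have : (u, v) ^ p ^ k = 1 := kerParam_injective g (by rw [map_pow, huv, hσp, map_one])
    exact eq_one_of_pow_prime_pow_eq_one hp (by rwa [Nat.card_eq_fintype_card])
      (congrArg Prod.fst this)
  exact ⟨v, by rw [← kerParam_mk_one_left, ← hu, huv]⟩

variable {p a : ℕ} {g : Perm α}

theorem coe_sylow_eq_cyclePowers (hp : p.Prime) (hg : g.cycleType = Multiset.replicate a p)
    (ha : a < p) (hα : Fintype.card α < (a + 1) * p) (P : Sylow p (Perm α)) (hgP : g ∈ P) :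
    (P : Subgroup (Perm α)) = cyclePowers g := by
  have := Fact.mk hp
  have hcard : Nat.card (cyclePowers g) = p ^ a := by
    rw [card_cyclePowers, hg, Multiset.prod_replicate]
  have hsupport : a * p ≤ Fintype.card α := by
    have := g.sum_cycleType ▸ Finset.card_le_univ g.support
    rwa [hg, Multiset.sum_replicate, smul_eq_mul] at this
  have hfact : (Nat.card (Perm α)).factorization p = a := by
    rw [Nat.card_perm, Nat.card_eq_fintype_card, Nat.factorization_factorial_eq_div hp
      (by nlinarith), Nat.div_eq_of_lt_le hsupport hα]
  let Z : Sylow p (Perm α) := Sylow.ofCard (cyclePowers g) (by rw [hcard, hfact])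
  have hcycles : g.cycleFactorsFinset.card = a := by
    rw [← Multiset.card_replicate a p, ← hg, cycleType_def, Multiset.card_map]; rfl
  have hfixed : Fintype.card (Function.fixedPoints g) < p := by
    rw [card_fixedPoints, hg, Multiset.sum_replicate, smul_eq_mul]
    rw [add_one_mul] at hα
    omega
  refine (P.is_maximal' (IsPGroup.of_card hcard) fun σ hσ => ?_).symm
  obtain ⟨k, hk⟩ := P.isPGroup' ⟨σ, hσ⟩
  exact mem_cyclePowers_of_commute hp
    (Z.commute_of_forall_commute (fun _ h₁ _ h₂ => commute_of_mem_cyclePowers h₁ h₂) P hσ hgP)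
    (congrArg Subtype.val hk) (hcycles ▸ ha) hfixed

theorem sylow_eq_of_cycleType_eq_replicate (hp : p.Prime)
    (hg : g.cycleType = Multiset.replicate a p) (ha : a < p) (hα : Fintype.card α < (a + 1) * p)
    {P Q : Sylow p (Perm α)} (hgP : g ∈ P) (hgQ : g ∈ Q) : P = Q :=
  Sylow.ext ((coe_sylow_eq_cyclePowers hp hg ha hα P hgP).trans
    (coe_sylow_eq_cyclePowers hp hg ha hα Q hgQ).symm)

theorem sylow_le_centralizer_of_cycleType_eq_replicate (hp : p.Prime)
    (hg : g.cycleType = Multiset.replicate a p) (ha : a < p) (hα : Fintype.card α < (a + 1) * p)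
    {P : Sylow p (Perm α)} (hgP : g ∈ P) : (P : Subgroup (Perm α)) ≤ centralizer {g} := by
  have hP := coe_sylow_eq_cyclePowers hp hg ha hα P hgP
  have hgZ : g ∈ cyclePowers g := hP ▸ hgP
  exact hP ▸ fun σ hσ => mem_centralizer_singleton_iff.2 (commute_of_mem_cyclePowers hσ hgZ).eq

theorem mem_normalizer_of_isSubnormalIn (hp : p.Prime)
    (hg : g.cycleType = Multiset.replicate a p) (ha : a < p) (hα : Fintype.card α < (a + 1) * p)
    {P : Sylow p (Perm α)} (hgP : g ∈ P) {h : Perm α}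
    (hsub : (zpowers g).IsSubnormalIn (closure {h, g})) : h ∈ normalizer (P : Set (Perm α)) := by
  have := Fact.mk hp
  obtain ⟨Q, hgQ, hhgQ⟩ := hsub.exists_sylow_mem_conj (P.isPGroup'.to_le (zpowers_le.2 hgP))
    (mem_zpowers g) (subset_closure (Set.mem_insert h {g}))
  have hhgP : h * g * h⁻¹ ∈ h • P := by
    rw [← SetLike.mem_coe, Sylow.coe_smul]
    exact ⟨g, hgP, rfl⟩
  rw [← Sylow.smul_eq_iff_mem_normalizer,
    sylow_eq_of_cycleType_eq_replicate hp (by rw [cycleType_conj, hg]) ha hα hhgP hhgQ,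
    sylow_eq_of_cycleType_eq_replicate hp hg ha hα hgQ hgP]

end Equiv.Perm

/-- Proposition 5.1 (first case): let `p` be a prime, `n = a·p + r` with `a, r ≤ p - 1`,
and `x ∈ S_n` of cycle type `(p)^a`. Then for every Sylow `p`-subgroup `P` of `S_n`
containing `x`, the subnormaliser of `x` equals the normaliser of `P`, i.e. `x` is picky. -/
theorem subnormaliser_perm_full_cycle_count (p : ℕ) (hp : p.Prime) (a r n : ℕ)
    (ha : a ≤ p - 1) (hr : r ≤ p - 1) (hn : n = a * p + r)
    (x : Equiv.Perm (Fin n)) (hx : x.cycleType = Multiset.replicate a p)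
    (P : Sylow p (Equiv.Perm (Fin n))) (hxP : x ∈ (P : Subgroup (Equiv.Perm (Fin n)))) :
    subnormaliser x = Subgroup.normalizer ((P : Subgroup (Equiv.Perm (Fin n))) : Set (Equiv.Perm (Fin n))) := by
  have hp2 := hp.two_le
  have ha' : a < p := by omega
  have hα : Fintype.card (Fin n) < (a + 1) * p := by
    rw [Fintype.card_fin, hn, add_one_mul]
    omega
  apply le_antisymm
  · exact (closure_le _).2 fun g hg =>
      Equiv.Perm.mem_normalizer_of_isSubnormalIn hp hx ha' hα hxP hg
  · exact fun g hg => subset_closure (zpowers_isSubnormalIn_closure hxP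
      (Equiv.Perm.sylow_le_centralizer_of_cycleType_eq_replicate hp hx ha' hα hxP) hg)
end

section
/- Let p be a prime and let n = a·p + r with natural numbers a, r satisfying 0 ≤ a ≤ p − 1 and 0 ≤ r ≤ p − 1. Let x be an element of the symmetric group S_n whose cycle type is (p)^k, and assume that either k ≤ a − 2, or (k = a − 1 and r ≥ 1). Then the subnormaliser of x in S_n is all of S_n: Sub_{S_n}(x) = S_n. -/
section Subnormaliser

variable {G : Type*} [Group G] {x g : G}

open Subgroup

theorem mem_subnormaliser_of_mem_normalizer (A : Subgroup G) (hxA : x ∈ A)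
    (hA : A ≤ normalizer (zpowers x : Set G)) (hg : g ∈ normalizer (A : Set G)) :
    g ∈ subnormaliser x := by
  set M := closure ({g, x} : Set G)
  have hgM : g ∈ M := subset_closure (by simp)
  have hxM : x ∈ M := subset_closure (by simp)
  have hMA : M ≤ normalizer (A : Set G) := by
    rw [closure_le]
    rintro y (rfl | rfl)
    exacts [hg, A.le_normalizer hxA]
  have hx_le : zpowers x ≤ A ⊓ M := zpowers_le.mpr ⟨hxA, hxM⟩
  refine subset_closure
    ⟨2, fun i => if i = 0 then zpowers x else if i = 1 then A ⊓ M else M,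
      rfl, rfl, fun i hi => ?_⟩
  interval_cases i
  · exact ⟨hx_le, (normal_subgroupOf_iff_le_normalizer hx_le).mpr (inf_le_left.trans hA)⟩
  · exact ⟨inf_le_right, (normal_subgroupOf_iff_le_normalizer inf_le_right).mpr
      ((le_inf hMA M.le_normalizer).trans inf_normalizer_le_normalizer_inf)⟩

/-- The chain is `⟨x⟩ ⊴ C ⊓ ⟨g, x⟩ ⊴ ⟨g, x⟩` for the centralizer `C` of `{x, g x g⁻¹}`, which the
involution `g` normalises by swapping the two elements. -/
theorem mem_subnormaliser_of_commute_conj (hg : g * g = 1) (h : Commute x (g * x * g⁻¹)) :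
    g ∈ subnormaliser x := by
  have hg_inv : g⁻¹ = g := inv_eq_of_mul_eq_one_right hg
  have hx : g * (g * x * g⁻¹) * g⁻¹ = x := by
    rw [hg_inv]; simp only [← mul_assoc, hg, one_mul, mul_assoc x, mul_one]
  refine mem_subnormaliser_of_mem_normalizer (centralizer {x, g * x * g⁻¹}) ?_ ?_ ?_
  · simpa [mem_centralizer_iff] using h.eq.symm
  · calc centralizer {x, g * x * g⁻¹}
        ≤ centralizer {x} := centralizer_le (by simp)
      _ = centralizer (zpowers x) := by rw [zpowers_eq_closure, centralizer_closure]
      _ ≤ _ := centralizer_le_normalizer _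
  · rw [mem_normalizer_iff]
    intro k
    have hconj := Commute.conj_iff (a := g * x * g⁻¹) (b := k) g
    rw [hx] at hconj
    simp only [mem_centralizer_iff, Set.mem_insert_iff, Set.mem_singleton_iff,
      forall_eq_or_imp, forall_eq, ← commute_iff_eq, hconj, Commute.conj_iff]
    exact and_comm

end Subnormaliser

open Finset

namespace Equiv.Perm

variable {α : Type*} [DecidableEq α]

theorem exists_mul_self_eq_one_mapsTo_of_card_le {s t : Finset α} (hst : _root_.Disjoint s t)
    (hcard : #s ≤ #t) :
    ∃ τ : Perm α, τ * τ = 1 ∧ (∀ z ∈ s, τ z ∈ t) ∧ ∀ z ∉ s, z ∉ t → τ z = z := by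
  obtain ⟨t', ht', hcard'⟩ := exists_subset_card_eq hcard
  have hst' : _root_.Disjoint s t' := hst.mono_right ht'
  let e := equivOfCardEq hcard'.symm
  let f : α → α := fun z =>
    if hs : z ∈ s then e ⟨z, hs⟩ else if ht : z ∈ t' then e.symm ⟨z, ht⟩ else z
  have hf_s : ∀ z (hs : z ∈ s), f z = e ⟨z, hs⟩ := fun z hs => dif_pos hs
  have hf_t : ∀ z (ht : z ∈ t'), f z = e.symm ⟨z, ht⟩ := fun z ht =>
    (dif_neg (disjoint_right.mp hst' ht)).trans (dif_pos ht)
  have hf_o : ∀ z, z ∉ s → z ∉ t' → f z = z := fun z hs ht =>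
    (dif_neg hs).trans (dif_neg ht)
  have hf : Function.Involutive f := by
    intro z
    by_cases hs : z ∈ s
    · rw [hf_s z hs, hf_t _ (e ⟨z, hs⟩).2]; simp
    by_cases ht : z ∈ t'
    · rw [hf_t z ht, hf_s _ (e.symm ⟨z, ht⟩).2]; simp
    rw [hf_o z hs ht, hf_o z hs ht]
  refine ⟨hf.toPerm, Equiv.ext hf, fun z hs => ht' ?_, fun z hs ht => hf_o z hs (ht <| ht' ·)⟩
  simp only [Function.Involutive.coe_toPerm, hf_s z hs, coe_mem]

variable [Fintype α] {x : Perm α} {u v : α}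

theorem commute_conj_of_mem_cycleFactorsFinset {c τ : Perm α}
    (hc : c ∈ x.cycleFactorsFinset) (hτc : ∀ z ∈ c.support, τ z ∉ x.support)
    (hτ : ∀ z ∈ x.support, z ∉ c.support → τ z = z) : Commute x (τ * x * τ⁻¹) := by
  have hdisj := disjoint_mul_inv_of_mem_cycleFactorsFinset hc
  have hsupp : (x * c⁻¹).support ∪ c.support = x.support := by
    rw [← hdisj.support_mul, inv_mul_cancel_right]
  have hτ_rest : Commute τ (x * c⁻¹) := by
    refine Disjoint.commute fun z => or_iff_not_imp_right.mpr fun hz => hτ z ?_ ?_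
    · exact hsupp ▸ mem_union_left _ (mem_support.mpr hz)
    · exact disjoint_left.mp hdisj.disjoint_support (mem_support.mpr hz)
  have hx_moved : Disjoint x (τ * c * τ⁻¹) := by
    rw [disjoint_iff_disjoint_support, support_conj, disjoint_right]
    rintro _ hτz
    obtain ⟨z, hz, rfl⟩ := mem_map.mp hτz
    exact hτc z hz
  have hconj : τ * x * τ⁻¹ = x * c⁻¹ * (τ * c * τ⁻¹) := by
    conv_lhs => rw [← inv_mul_cancel_right x c]
    rw [← mul_assoc τ, hτ_rest.eq]; group
  rw [hconj]
  exact ((Commute.refl x).mul_right (self_mem_cycle_factors_commute hc).symm.inv_right).mul_right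
    hx_moved.commute

theorem swap_mem_subnormaliser_of_notMem_support (hu : u ∉ x.support) (hv : v ∉ x.support) :
    swap u v ∈ subnormaliser x := by
  have hdisj : Disjoint (swap u v) x := fun z => by
    by_cases hz : z = u ∨ z = v
    · rcases hz with rfl | rfl
      exacts [Or.inr (notMem_support.mp hu), Or.inr (notMem_support.mp hv)]
    · obtain ⟨hzu, hzv⟩ := not_or.mp hz
      exact Or.inl (swap_apply_of_ne_of_ne hzu hzv)
  refine mem_subnormaliser_of_commute_conj (swap_mul_self u v) ?_
  rw [hdisj.commute.eq, mul_inv_cancel_right]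
  exact Commute.refl x

theorem swap_mem_subnormaliser_of_mem_support (hu : u ∈ x.support) (hv : v ∉ x.support)
    (h : #(x.cycleOf u).support < #x.supportᶜ) : swap u v ∈ subnormaliser x := by
  set c := x.cycleOf u
  have hc : c ∈ x.cycleFactorsFinset := cycleOf_mem_cycleFactorsFinset_iff.mpr hu
  have hcx : c.support ⊆ x.support := mem_cycleFactorsFinset_support_le hc
  have hdisj : _root_.Disjoint c.support (x.supportᶜ.erase v) :=
    disjoint_left.mpr fun z hz hz' => mem_compl.mp (mem_of_mem_erase hz') (hcx hz)
  have hcard : #c.support ≤ #(x.supportᶜ.erase v) := by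
    rw [card_erase_of_mem (mem_compl.mpr hv)]; omega
  obtain ⟨τ, hττ, hτc, hτ⟩ := exists_mul_self_eq_one_mapsTo_of_card_le hdisj hcard
  have hτ_mem : τ ∈ subnormaliser x := by
    refine mem_subnormaliser_of_commute_conj hττ (commute_conj_of_mem_cycleFactorsFinset hc
      (fun z hz => mem_compl.mp (mem_of_mem_erase (hτc z hz))) fun z hz hzc => hτ z hzc ?_)
    exact fun hz' => mem_compl.mp (mem_of_mem_erase hz') hz
  have hτu : τ u ∉ x.support :=
    mem_compl.mp (mem_of_mem_erase (hτc u (mem_support_cycleOf_iff.mpr ⟨.refl x u, hu⟩)))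
  have hτv : τ v = v := hτ v (fun hvc => hv (hcx hvc)) (notMem_erase v _)
  have hswap : swap u v = τ * swap (τ u) (τ v) * τ⁻¹ := by
    rw [swap_apply_apply, ← mul_assoc, ← mul_assoc, hττ, one_mul, mul_assoc, ← mul_inv_rev, hττ,
      inv_one, mul_one]
  rw [hswap, hτv]
  exact mul_mem (mul_mem hτ_mem (swap_mem_subnormaliser_of_notMem_support hτu hv))
    (inv_mem hτ_mem)

theorem subnormaliser_eq_top_of_forall_lt_card_compl_support
    (h : ∀ i ∈ x.cycleType, i < #x.supportᶜ) : subnormaliser x = ⊤ := by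
  have hcycle : ∀ u ∈ x.support, #(x.cycleOf u).support < #x.supportᶜ := fun u hu =>
    h _ (cycleType_def x ▸ Multiset.mem_map_of_mem _
      (cycleOf_mem_cycleFactorsFinset_iff.mpr hu))
  have hswap : ∀ u v, v ∉ x.support → swap u v ∈ subnormaliser x := fun u v hv => by
    by_cases hu : u ∈ x.support
    · exact swap_mem_subnormaliser_of_mem_support hu hv (hcycle u hu)
    · exact swap_mem_subnormaliser_of_notMem_support hu hv
  rw [eq_top_iff, ← closure_isSwap, Subgroup.closure_le]
  rintro _ ⟨u, v, huv, rfl⟩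
  by_cases hv : v ∉ x.support
  · exact hswap u v hv
  by_cases hu : u ∉ x.support
  · exact swap_comm u v ▸ hswap v u hu
  rw [not_not] at hu hv
  obtain ⟨w, hw⟩ : x.supportᶜ.Nonempty := card_pos.mp (Nat.zero_lt_of_lt (hcycle u hu))
  have hvw : v ≠ w := fun hvw => mem_compl.mp hw (hvw ▸ hv)
  rw [← swap_mul_swap_mul_swap hvw huv.symm, swap_comm w u]
  exact mul_mem (mul_mem (hswap u w (mem_compl.mp hw)) (hswap v w (mem_compl.mp hw)))
    (hswap u w (mem_compl.mp hw))

end Equiv.Perm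

theorem subnormaliser_perm_eq_top_general (p : ℕ) (a r n k : ℕ)
    (hn : n = a * p + r)
    (x : Equiv.Perm (Fin n)) (hx : x.cycleType = Multiset.replicate k p)
    (hk : k ≤ a - 2 ∨ (k = a - 1 ∧ 1 ≤ r)) :
    subnormaliser x = ⊤ := by
  refine Equiv.Perm.subnormaliser_eq_top_of_forall_lt_card_compl_support fun i hi => ?_
  have hi_two := Equiv.Perm.two_le_of_mem_cycleType hi
  obtain ⟨hk0, hip⟩ := Multiset.mem_replicate.mp (hx ▸ hi)
  rw [hip] at hi_two ⊢
  have hsupp : x.support.card = k * p := by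
    rw [← Equiv.Perm.sum_cycleType, hx, Multiset.sum_replicate, smul_eq_mul]
  have hfixed : k * p + p < n := by
    rcases hk with hk | ⟨hk, hr⟩
    · have h2 : (k + 2) * p ≤ a * p := Nat.mul_le_mul_right p (by omega)
      rw [add_mul] at h2
      omega
    · obtain rfl : a = k + 1 := by omega
      rw [add_mul] at hn
      omega
  rw [Finset.card_compl, Fintype.card_fin, hsupp]
  omega

/-- Proposition 5.1 (last case): let `p` be a prime, `n = a·p + r` with `a, r ≤ p - 1`,
and `x ∈ S_n` of cycle type `(p)^k` where `k ≤ a - 2`, or `k = a - 1` and `r ≥ 1`.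
Then the subnormaliser of `x` is all of `S_n`. -/
theorem subnormaliser_perm_eq_top (p : ℕ) (hp : p.Prime) (a r n k : ℕ)
    (ha : a ≤ p - 1) (hr : r ≤ p - 1) (hn : n = a * p + r)
    (x : Equiv.Perm (Fin n)) (hx : x.cycleType = Multiset.replicate k p)
    (hk : k ≤ a - 2 ∨ (k = a - 1 ∧ 1 ≤ r)) :
    subnormaliser x = ⊤ :=
  subnormaliser_perm_eq_top_general p a r n k hn x hx hk
end

section
/- Let p be a prime and let n = a·p + r with natural numbers a, r satisfying 0 ≤ a ≤ p − 1 and 0 ≤ r ≤ p − 1. Let P be a Sylow p-subgroup of the symmetric group S_n. Then the normaliser of P in S_n has cardinality |N_{S_n}(P)| = p^a · (p − 1)^a · a! · r!. (The normaliser is the group (C_p ⋊ C_{p−1}) ≀ S_a × S_r.) -/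
/-!
Identify `Fin n` with `(Fin a × ZMod p) ⊕ Fin r`. Since `a, r < p`, the `p`-part of `n!` is
`p ^ a`, so the translations `(i, x) ↦ (i, x + v i)` fixing the `r` extra points form a Sylow
`p`-subgroup `T`. The index of a Sylow normaliser is the number of Sylow subgroups, so all Sylow
normalisers have the same order and it suffices to count the normaliser of `T`.
A permutation `σ` normalising `T` preserves its fixed points `Fin r`, and it conjugates the unit
translation of block `i` into a translation, so `σ (i, x + 1)` is `σ (i, x)` translated inside
its block. Hence `σ` permutes the blocks and is affine on each of them: the normaliser is
`(ZMod p ⋊ (ZMod p)ˣ) ≀ S_a × S_r`.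
-/

open Equiv Subgroup

theorem Equiv.Perm.sumCongr_inj {α β : Type*} {e e' : Perm α} {f f' : Perm β} :
    sumCongr e f = sumCongr e' f' ↔ e = e' ∧ f = f' :=
  Perm.sumCongrHom_injective.eq_iff (a := (e, f)) (b := (e', f')) |>.trans Prod.ext_iff

namespace Sylow

variable {G H : Type*} [Group G] [Group H] [Finite G] {p : ℕ} [Fact p.Prime]

theorem card_normalizer_eq (P Q : Sylow p G) :
    Nat.card (normalizer ((P : Subgroup G) : Set G)) =
      Nat.card (normalizer ((Q : Subgroup G) : Set G)) := by
  have h (P : Sylow p G) :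
      Nat.card (normalizer ((P : Subgroup G) : Set G)) * Nat.card (Sylow p G) = Nat.card G := by
    rw [P.card_eq_index_normalizer]
    exact card_mul_index _
  exact Nat.eq_of_mul_eq_mul_right Nat.card_pos ((h P).trans (h Q).symm)

theorem card_normalizer_eq_of_mulEquiv (e : G ≃* H) (P : Sylow p G) (Q : Sylow p H) :
    Nat.card (normalizer ((P : Subgroup G) : Set G)) =
      Nat.card (normalizer ((Q : Subgroup H) : Set H)) := by
  have : Finite H := Finite.of_equiv G e.toEquiv
  calc Nat.card (normalizer ((P : Subgroup G) : Set G))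
      = Nat.card ((normalizer (P : Subgroup G)).map e.toMonoidHom) :=
        Nat.card_congr (equivMapOfInjective _ _ e.injective).toEquiv
    _ = Nat.card (normalizer
          (((P.mapSurjective e.surjective : Sylow p H) : Subgroup H) : Set H)) := by
        rw [map_equiv_normalizer_eq]; rfl
    _ = Nat.card (normalizer ((Q : Subgroup H) : Set H)) := card_normalizer_eq _ Q

end Sylow

theorem Nat.factorization_factorial_mul_add {p : ℕ} (hp : p.Prime) {a r : ℕ} (ha : a < p)
    (hr : r < p) : (a * p + r).factorial.factorization p = a := by
  have : Fact p.Prime := ⟨hp⟩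
  have ha' : padicValNat p a.factorial = 0 :=
    padicValNat.eq_zero_of_not_dvd fun h => by
      have := (hp.dvd_factorial).mp h
      omega
  rw [Nat.factorization_def _ hp, mul_comm, padicValNat_factorial_mul_add a hr,
    padicValNat_factorial_mul, ha', zero_add]

theorem ZMod.map_eq_of_map_add_one {n : ℕ} [NeZero n] {β : Type*} {F : ZMod n → β × ZMod n}
    {w : β → ZMod n} (h : ∀ x, F (x + 1) = ((F x).1, (F x).2 + w (F x).1)) (x : ZMod n) :
    F x = ((F 0).1, (F 0).2 + x * w (F 0).1) := by
  obtain ⟨m, rfl⟩ := ZMod.natCast_zmod_surjective x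
  induction m with
  | zero => simp
  | succ m ih => rw [Nat.cast_succ, h, ih]; congr 1; ring

namespace SylowPerm

variable {p a : ℕ}

def blockTranslation (v : Fin a → ZMod p) : Perm (Fin a × ZMod p) :=
  prodShear (Equiv.refl _) fun i => Equiv.addRight (v i)

def blockAffine (f : Fin a → ZMod p × (ZMod p)ˣ) (g : Perm (Fin a)) : Perm (Fin a × ZMod p) :=
  prodShear g fun i => (Units.mulRight (f i).2).trans (Equiv.addLeft (f i).1)

@[simp] theorem blockTranslation_apply (v : Fin a → ZMod p) (z : Fin a × ZMod p) :
    blockTranslation v z = (z.1, z.2 + v z.1) := rfl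

@[simp] theorem blockAffine_apply (f : Fin a → ZMod p × (ZMod p)ˣ) (g : Perm (Fin a))
    (z : Fin a × ZMod p) : blockAffine f g z = (g z.1, (f z.1).1 + z.2 * (f z.1).2) := rfl

@[simp] theorem blockTranslation_zero : blockTranslation (0 : Fin a → ZMod p) = 1 := by
  ext <;> simp

theorem blockTranslation_add (v w : Fin a → ZMod p) :
    blockTranslation (v + w) = blockTranslation v * blockTranslation w := by
  ext <;> simp [add_comm, add_left_comm]

theorem blockTranslation_neg (v : Fin a → ZMod p) :
    blockTranslation (-v) = (blockTranslation v)⁻¹ :=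
  eq_inv_of_mul_eq_one_left <| by
    rw [← blockTranslation_add, neg_add_cancel, blockTranslation_zero]

theorem blockTranslation_injective [NeZero p] :
    Function.Injective (blockTranslation : (Fin a → ZMod p) → _) := fun v w h =>
  funext fun i => by simpa using congrArg Prod.snd (DFunLike.congr_fun h (i, 0))

theorem blockAffine_mul_blockTranslation (f : Fin a → ZMod p × (ZMod p)ˣ) (g : Perm (Fin a))
    (v : Fin a → ZMod p) :
    blockAffine f g * blockTranslation v =
      blockTranslation (fun j => v (g⁻¹ j) * ((f (g⁻¹ j)).2 : ZMod p)) * blockAffine f g := by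
  ext ⟨i, x⟩
  · simp
  · simp; ring

theorem blockAffine_inj {f f' : Fin a → ZMod p × (ZMod p)ˣ} {g g' : Perm (Fin a)} :
    blockAffine f g = blockAffine f' g' ↔ f = f' ∧ g = g' := by
  refine ⟨fun h => ?_, fun h => h.1 ▸ h.2 ▸ rfl⟩
  have h0 (i : Fin a) := DFunLike.congr_fun h (i, 0)
  have h1 (i : Fin a) := DFunLike.congr_fun h (i, 1)
  simp only [blockAffine_apply, Prod.mk.injEq, zero_mul, add_zero, one_mul] at h0 h1
  refine ⟨funext fun i => Prod.ext (h0 i).2 (Units.ext ?_), Equiv.ext fun i => (h0 i).1⟩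
  simpa [(h0 i).2] using (h1 i).2

variable (p a) (r : ℕ)

def translationSubgroup : Subgroup (Perm ((Fin a × ZMod p) ⊕ Fin r)) where
  carrier := Set.range fun v => sumCongr (blockTranslation v) 1
  one_mem' := ⟨0, by simp⟩
  mul_mem' := by
    rintro _ _ ⟨v, rfl⟩ ⟨w, rfl⟩
    exact ⟨v + w, by simp [blockTranslation_add]⟩
  inv_mem' := by
    rintro _ ⟨v, rfl⟩
    exact ⟨-v, by simp [blockTranslation_neg]⟩

variable {p a r}

theorem card_translationSubgroup [NeZero p] : Nat.card (translationSubgroup p a r) = p ^ a := by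
  have hinj : Function.Injective fun v : Fin a → ZMod p =>
      (sumCongr (blockTranslation v) 1 : Perm ((Fin a × ZMod p) ⊕ Fin r)) := fun v w h =>
    blockTranslation_injective (Perm.sumCongr_inj.mp h).1
  calc Nat.card (translationSubgroup p a r) = Nat.card (Fin a → ZMod p) :=
        Nat.card_range_of_injective hinj
    _ = p ^ a := by simp [Nat.card_eq_fintype_card, ZMod.card]

theorem exists_mul_translation_eq {σ : Perm ((Fin a × ZMod p) ⊕ Fin r)}
    (hσ : σ ∈ normalizer (translationSubgroup p a r : Set _)) (v : Fin a → ZMod p) :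
    ∃ w, σ * sumCongr (blockTranslation v) 1 = sumCongr (blockTranslation w) 1 * σ := by
  obtain ⟨w, hw : sumCongr (blockTranslation w) 1 =
      σ * sumCongr (blockTranslation v) 1 * σ⁻¹⟩ := (mem_normalizer_iff.mp hσ _).mp ⟨v, rfl⟩
  exact ⟨w, by rw [hw, inv_mul_cancel_right]⟩

variable [Fact p.Prime]

theorem exists_blockAffine_eq {σ : Perm (Fin a × ZMod p)}
    (hσ : ∀ v, ∃ w, σ * blockTranslation v = blockTranslation w * σ) :
    ∃ f g, blockAffine f g = σ := by
  have hblock (i : Fin a) : ∃ c, ∀ x, σ (i, x) = ((σ (i, 0)).1, (σ (i, 0)).2 + x * c) := by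
    obtain ⟨w, hw⟩ := hσ (Pi.single i 1)
    exact ⟨_, ZMod.map_eq_of_map_add_one (F := fun x => σ (i, x)) fun x => by
      simpa using DFunLike.congr_fun hw (i, x)⟩
  choose c hc using hblock
  have hc0 (i : Fin a) : c i ≠ 0 := fun h0 => by
    have : σ (i, 1) = σ (i, 0) := by rw [hc i 1, h0, mul_zero, add_zero]
    simpa using σ.injective this
  have hg : Function.Surjective fun i => (σ (i, 0)).1 := fun k => by
    obtain ⟨⟨i, x⟩, hix⟩ := σ.surjective (k, 0)
    exact ⟨i, by simpa [hc i x] using congrArg Prod.fst hix⟩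
  refine ⟨fun i => ((σ (i, 0)).2, Units.mk0 (c i) (hc0 i)),
    Equiv.ofBijective _ hg.bijective_of_finite, ?_⟩
  ext ⟨i, x⟩ <;> simp [hc i x]

theorem sumCongr_blockAffine_mem_normalizer (f : Fin a → ZMod p × (ZMod p)ˣ) (g : Perm (Fin a))
    (π : Perm (Fin r)) :
    sumCongr (blockAffine f g) π ∈ normalizer (translationSubgroup p a r : Set _) := by
  refine mem_normalizer_fintype ?_
  rintro _ ⟨v, rfl⟩
  refine ⟨fun j => v (g⁻¹ j) * (f (g⁻¹ j)).2, ?_⟩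
  dsimp only
  rw [eq_mul_inv_iff_mul_eq, Perm.sumCongr_mul, Perm.sumCongr_mul,
    blockAffine_mul_blockTranslation, one_mul, mul_one]

theorem mapsTo_range_inr_of_mem_normalizer {σ : Perm ((Fin a × ZMod p) ⊕ Fin r)}
    (hσ : σ ∈ normalizer (translationSubgroup p a r : Set _)) :
    Set.MapsTo σ (Set.range Sum.inr) (Set.range Sum.inr) := by
  rintro _ ⟨j, rfl⟩
  rcases hσj : σ (Sum.inr j) with ⟨i, x⟩ | j'
  · obtain ⟨w, hw⟩ := exists_mul_translation_eq (inv_mem hσ) (Pi.single i 1)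
    have hσj' : σ⁻¹ (Sum.inl (i, x)) = Sum.inr j := Perm.inv_eq_iff_eq.mpr hσj.symm
    have h := DFunLike.congr_fun hw (Sum.inl (i, x))
    simp [Perm.mul_apply, hσj', Equiv.symm_apply_eq, hσj] at h
  · exact ⟨j', rfl⟩

theorem mem_normalizer_translationSubgroup_iff {σ : Perm ((Fin a × ZMod p) ⊕ Fin r)} :
    σ ∈ normalizer (translationSubgroup p a r : Set _) ↔
      ∃ f g π, sumCongr (blockAffine f g) π = σ := by
  refine ⟨fun hσ => ?_, ?_⟩
  · obtain ⟨⟨σ₁, π⟩, rfl⟩ := Perm.mem_sumCongrHom_range_of_perm_mapsTo_inl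
      ((Perm.perm_mapsTo_inl_iff_mapsTo_inr σ).mpr (mapsTo_range_inr_of_mem_normalizer hσ))
    obtain ⟨f, g, rfl⟩ := exists_blockAffine_eq fun v => by
      obtain ⟨w, hw⟩ := exists_mul_translation_eq hσ v
      exact ⟨w, (Perm.sumCongr_inj.mp (by simpa [Perm.sumCongr_mul] using hw)).1⟩
    exact ⟨f, g, π, rfl⟩
  · rintro ⟨f, g, π, rfl⟩
    exact sumCongr_blockAffine_mem_normalizer f g π

theorem card_normalizer_translationSubgroup :
    Nat.card (normalizer (translationSubgroup p a r : Set (Perm ((Fin a × ZMod p) ⊕ Fin r)))) =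
      p ^ a * (p - 1) ^ a * a.factorial * r.factorial := by
  let φ (t : (Fin a → ZMod p × (ZMod p)ˣ) × Perm (Fin a) × Perm (Fin r)) :
      normalizer (translationSubgroup p a r : Set _) :=
    ⟨sumCongr (blockAffine t.1 t.2.1) t.2.2, sumCongr_blockAffine_mem_normalizer _ _ _⟩
  have hφ : Function.Bijective φ := by
    refine ⟨fun t t' h => ?_, fun ⟨σ, hσ⟩ => ?_⟩
    · obtain ⟨h₁, h₂⟩ := Perm.sumCongr_inj.mp (Subtype.ext_iff.mp h)
      obtain ⟨hf, hg⟩ := blockAffine_inj.mp h₁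
      exact Prod.ext hf (Prod.ext hg h₂)
    · obtain ⟨f, g, π, rfl⟩ := mem_normalizer_translationSubgroup_iff.mp hσ
      exact ⟨(f, g, π), rfl⟩
  rw [← Nat.card_congr (Equiv.ofBijective φ hφ)]
  simp [Nat.card_eq_fintype_card, Fintype.card_perm, ZMod.card, Nat.totient_prime Fact.out,
    mul_pow]
  ring

end SylowPerm

open SylowPerm in
/-- For a prime `p` and `n = a·p + r` with `a, r ≤ p - 1`, the normaliser of a Sylow
`p`-subgroup of the symmetric group `S_n` has order `p^a * (p-1)^a * a! * r!`. -/
theorem card_normalizer_sylow_perm (p : ℕ) (hp : p.Prime) (a r n : ℕ)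
    (ha : a ≤ p - 1) (hr : r ≤ p - 1) (hn : n = a * p + r)
    (P : Sylow p (Equiv.Perm (Fin n))) :
    Nat.card (Subgroup.normalizer ((P : Subgroup (Equiv.Perm (Fin n))) : Set (Equiv.Perm (Fin n)))) =
      p ^ a * (p - 1) ^ a * a.factorial * r.factorial := by
  have : Fact p.Prime := ⟨hp⟩
  have hcard : Fintype.card ((Fin a × ZMod p) ⊕ Fin r) = n := by
    simp [hn, ZMod.card, mul_comm]
  have hsylow : Nat.card (translationSubgroup p a r) =
      p ^ (Nat.card (Perm ((Fin a × ZMod p) ⊕ Fin r))).factorization p := by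
    have := hp.two_le
    rw [card_translationSubgroup, Nat.card_perm, Nat.card_eq_fintype_card, hcard, hn,
      Nat.factorization_factorial_mul_add hp (by omega) (by omega)]
  let e : Fin n ≃ (Fin a × ZMod p) ⊕ Fin r := Fintype.equivOfCardEq (by simp [hcard])
  rw [Sylow.card_normalizer_eq_of_mulEquiv e.permCongrHom P (Sylow.ofCard _ hsylow)]
  exact card_normalizer_translationSubgroup
end
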